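/- Let (μ(t))_{t≥0} be a solution of the full selection–mutation model with mutation kernel γ. Suppose there exist a Borel set E ⊆ Q and ε > 0 such that inf_{q∈E} R(ε,q)·γ(q)(E) > 1 and μ(0)(E) > 0. Then the population is uniformly weakly persistent: limsup_{t→∞} μ(t)(Q) ≥ ε. -/

import Mathlib

open MeasureTheory Filter Set Topology

noncomputable section

/-- Birth and mortality rates `f₁`, `f₂` on `ℝ × Q` satisfying assumptions (A1)-(A2). -/
structure EGTRates (Q : Type*) [MetricSpace Q] where
  f₁ : ℝ → Q → ℝ
  f₂ : ℝ → Q → ℝ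
  f₁_nonneg : ∀ X q, 0 ≤ f₁ X q
  f₂_nonneg : ∀ X q, 0 ≤ f₂ X q
  f₁_lip : ∀ C : ℝ, ∃ L : ℝ, 0 ≤ L ∧ ∀ q : Q, ∀ X ∈ Set.Icc (-C) C, ∀ Y ∈ Set.Icc (-C) C,
    |f₁ X q - f₁ Y q| ≤ L * |X - Y|
  f₂_lip : ∀ C : ℝ, ∃ L : ℝ, 0 ≤ L ∧ ∀ q : Q, ∀ X ∈ Set.Icc (-C) C, ∀ Y ∈ Set.Icc (-C) C,
    |f₂ X q - f₂ Y q| ≤ L * |X - Y|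
  f₁_anti : ∀ q, AntitoneOn (fun X => f₁ X q) (Set.Ici 0)
  f₂_mono : ∀ q, MonotoneOn (fun X => f₂ X q) (Set.Ici 0)
  f₁_cont : ∀ X, Continuous fun q => f₁ X q
  f₂_cont : ∀ X, Continuous fun q => f₂ X q
  f₂_inf_pos : ∃ ϖ : ℝ, 0 < ϖ ∧ ∀ q, ϖ ≤ f₂ 0 q

namespace EGTRates

variable {Q : Type*} [MetricSpace Q]

/-- The reproductive number `R(X,q) = f₁(X,q)/f₂(X,q)`. -/
def R (M : EGTRates Q) (X : ℝ) (q : Q) : ℝ := M.f₁ X q / M.f₂ X q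

/-- The carrying capacity `K(q)`. -/
def carCap (M : EGTRates Q) (q : Q) : ℝ :=
  if 1 ≤ M.R 0 q then sInf {K : ℝ | 0 ≤ K ∧ M.R K q ≤ 1} else 0

/-- Assumptions (A3)-(A5) relative to a fittest strategy `𝔔` and a least fit strategy `𝔮`. -/
def Assumptions (M : EGTRates Q) (𝔔 𝔮 : Q) : Prop :=
  (∀ q, M.R 0 q ≤ M.R 0 𝔔) ∧ (∀ q, M.R 0 𝔮 ≤ M.R 0 q) ∧
  (∃ X, 0 ≤ X ∧ M.R X 𝔔 ≤ 1) ∧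
  (∀ q qq : Q, ∀ Y : ℝ, 0 ≤ Y →
      (M.R 0 qq < M.R 0 q → M.R Y qq < M.R Y q) ∧
      (M.R 0 q = M.R 0 qq → M.R Y q = M.R Y qq)) ∧
  (1 ≤ M.R 0 𝔔 → M.R (M.carCap 𝔔) 𝔔 = 1 ∧ ∀ x, 0 ≤ x → M.R x 𝔔 = 1 → x = M.carCap 𝔔) ∧
  (1 ≤ M.R 0 𝔮 → M.R (M.carCap 𝔮) 𝔮 = 1 ∧ ∀ x, 0 ≤ x → M.R x 𝔮 = 1 → x = M.carCap 𝔮)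

/-- The class of fittest strategies `[𝔔]_R`. -/
def fittestClass (M : EGTRates Q) (𝔔 : Q) : Set Q := {q | M.R 0 q = M.R 0 𝔔}

end EGTRates

/-- Support of a Borel measure: points all of whose neighborhoods have positive measure. -/
def msupport {Q : Type*} [MetricSpace Q] [MeasurableSpace Q] (μ : Measure Q) : Set Q :=
  {q | ∀ ε : ℝ, 0 < ε → 0 < μ (Metric.ball q ε)}

/-- A solution of the full selection–mutation model with mutation kernel `γ`. -/
def IsSelMutSolution {Q : Type*} [MetricSpace Q] [MeasurableSpace Q] [BorelSpace Q]
    (M : EGTRates Q) (γ : Q → ProbabilityMeasure Q) (μ : ℝ → Measure Q) : Prop :=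
  (∀ t, IsFiniteMeasure (μ t)) ∧
  ∀ t ∈ Set.Ici (0:ℝ), ∀ E : Set Q, MeasurableSet E →
    HasDerivWithinAt (fun s => (μ s E).toReal)
      ((∫ qq, M.f₁ (μ t Set.univ).toReal qq * ((γ qq : Measure Q) E).toReal ∂(μ t)) -
        ∫ qq in E, M.f₂ (μ t Set.univ).toReal qq ∂(μ t)) (Set.Ici 0) t

/-- A solution of the pure selection (replicator) model. -/
def IsPureSelectionSolution {Q : Type*} [MetricSpace Q] [MeasurableSpace Q] [BorelSpace Q]
    (M : EGTRates Q) (μ : ℝ → Measure Q) : Prop :=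
  (∀ t, IsFiniteMeasure (μ t)) ∧
  ∀ t ∈ Set.Ici (0:ℝ), ∀ E : Set Q, MeasurableSet E →
    HasDerivWithinAt (fun s => (μ s E).toReal)
      (∫ q in E, (M.f₁ (μ t Set.univ).toReal q - M.f₂ (μ t Set.univ).toReal q) ∂(μ t))
      (Set.Ici 0) t

/-!
Because `𝔔` maximises `R(Y,·)` for every `Y ≥ 0` and `R(·,𝔔)` is nonincreasing, births cannot
exceed deaths once the total mass passes a point where `R(·,𝔔) ≤ 1`; hence the total mass is
bounded and its `limsup` is not a junk value. If the `limsup` were `< ε`, the total mass `X` would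
stay below `ε` after some time `T`, and then the net rate
`f₁(X,q) γ(q)(E) - f₂(X,q) ≥ (c - 1) f₂(ε,q) ≥ (c - 1) ϖ`, with `ϖ = inf f₂(0,·)`, would be
uniformly positive on `E`. By Grönwall `μ(t)(E)` then grows like `exp ((c - 1) ϖ (t - T))`,
contradicting `μ(t)(E) ≤ μ(t)(Q) < ε`; here `μ(T)(E) > 0` because before `T` the mass on `E`
can at worst decay exponentially.
-/

theorem Continuous.measurable_probabilityMeasure_apply {α Ω : Type*} [TopologicalSpace α]
    [MeasurableSpace α] [OpensMeasurableSpace α] [TopologicalSpace Ω] [MeasurableSpace Ω]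
    [BorelSpace Ω] [HasOuterApproxClosed Ω] {γ : α → ProbabilityMeasure Ω} (hγ : Continuous γ)
    {E : Set Ω} (hE : MeasurableSet E) : Measurable fun a => (γ a : Measure Ω) E := by
  induction E, hE using MeasurableSet.induction_on_open with
  | isOpen U hU =>
    -- Portmanteau: measures of open sets are lower semicontinuous in the weak topology.
    have hlsc : LowerSemicontinuous fun ν : ProbabilityMeasure Ω => (ν : Measure Ω) U :=
      lowerSemicontinuous_iff_le_liminf.2 fun ν =>
        ProbabilityMeasure.le_liminf_measure_open_of_tendsto tendsto_id hU
    exact (hlsc.comp hγ).measurable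
  | compl s hs hms =>
    have h : ∀ a, (γ a : Measure Ω) sᶜ = 1 - (γ a : Measure Ω) s := fun a => by
      rw [measure_compl hs (measure_ne_top _ _), measure_univ]
    simpa only [h] using hms.const_sub 1
  | iUnion f hd hm hms =>
    simpa only [measure_iUnion hd hm] using Measurable.tsum hms

theorem image_le_of_deriv_right_nonpos_of_ge {f f' : ℝ → ℝ} {a B : ℝ}
    (hf : ∀ t ∈ Ici a, HasDerivWithinAt f (f' t) (Ici a) t) (ha : f a ≤ B)
    (hB : ∀ t ∈ Ici a, B ≤ f t → f' t ≤ 0) : ∀ t ∈ Ici a, f t ≤ B := by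
  intro t (ht : a ≤ t)
  refine le_of_forall_pos_le_add fun η hη => ?_
  -- `f` cannot touch the fence `x ↦ B + s (1 + x - a)` of slope `s > 0`:
  -- there `f ≥ B`, so `f' ≤ 0`.
  set s := η / (1 + (t - a))
  have hs : 0 < s := div_pos hη (by linarith)
  have hfence : ∀ x ∈ Icc a t, f x ≤ B + s * (1 + (x - a)) := by
    refine image_le_of_deriv_right_lt_deriv_boundary'
      (B := fun x => B + s * (1 + (x - a))) (B' := fun _ => s)
      (fun x hx => (hf x hx.1).continuousWithinAt.mono Icc_subset_Ici_self)
      (fun x hx => (hf x hx.1).mono (Ici_subset_Ici.2 hx.1)) (by simp; linarith) (by fun_prop)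
      (fun x _ => ?_) fun x hx hfx => ?_
    · simpa using (((hasDerivAt_id x).sub_const a).const_add 1).const_mul s |>.const_add B
        |>.hasDerivWithinAt
    · refine (hB x hx.1 ?_).trans_lt hs
      rw [hfx]
      linarith [mul_nonneg hs.le (by linarith [hx.1] : 0 ≤ 1 + (x - a))]
  calc f t ≤ B + s * (1 + (t - a)) := hfence t ⟨ht, le_rfl⟩
    _ = B + η := by rw [div_mul_cancel₀ η (by linarith)]

theorem mul_exp_le_of_const_mul_le_deriv {f f' : ℝ → ℝ} {a k : ℝ}
    (hf : ∀ t ∈ Ici a, HasDerivWithinAt f (f' t) (Ici a) t)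
    (hk : ∀ t ∈ Ici a, k * f t ≤ f' t) : ∀ t ∈ Ici a, f a * Real.exp (k * (t - a)) ≤ f t := by
  intro t (ht : a ≤ t)
  -- Grönwall's inequality for `-f`, whose derivative is at most `k · (-f)`.
  have h := le_gronwallBound_of_liminf_deriv_right_le (f := -f) (f' := -f') (δ := -f a) (K := k)
    (ε := 0) (b := t) (fun x hx => (hf x hx.1).neg.continuousWithinAt.mono Icc_subset_Ici_self)
    (fun x hx r hr => ((hf x hx.1).neg.mono (Ici_subset_Ici.2 hx.1)).liminf_right_slope_le hr)
    le_rfl (fun x hx => by simpa using hk x hx.1) t ⟨ht, le_rfl⟩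
  rw [gronwallBound_ε0] at h
  simpa using h

namespace EGTRates

variable {Q : Type*} [MetricSpace Q] (M : EGTRates Q)

theorem exists_pos_le_f₂ : ∃ ϖ, 0 < ϖ ∧ ∀ X, 0 ≤ X → ∀ q, ϖ ≤ M.f₂ X q := by
  obtain ⟨ϖ, hϖ, hϖle⟩ := M.f₂_inf_pos
  exact ⟨ϖ, hϖ, fun X hX q => (hϖle q).trans (M.f₂_mono q self_mem_Ici hX hX)⟩

theorem f₂_pos {X : ℝ} (hX : 0 ≤ X) (q : Q) : 0 < M.f₂ X q := by
  obtain ⟨ϖ, hϖ, hϖle⟩ := M.exists_pos_le_f₂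
  exact hϖ.trans_le (hϖle X hX q)

theorem R_antitoneOn (q : Q) : AntitoneOn (M.R · q) (Ici 0) := fun X hX _ hY hXY =>
  div_le_div₀ (M.f₁_nonneg X q) (M.f₁_anti q hX hY hXY) (M.f₂_pos hX q) (M.f₂_mono q hX hY hXY)

theorem sub_mul_f₂_le_of_le_R_mul {X ε c p : ℝ} {q : Q} (hX : 0 ≤ X) (hXε : X ≤ ε)
    (hp : 0 ≤ p) (hc : c ≤ M.R ε q * p) : (c - 1) * M.f₂ ε q ≤ M.f₁ X q * p - M.f₂ X q := by
  have hf₂ε := M.f₂_pos (hX.trans hXε) q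
  have hbirth : c * M.f₂ ε q ≤ M.f₁ X q * p := calc
    c * M.f₂ ε q ≤ M.R ε q * p * M.f₂ ε q := mul_le_mul_of_nonneg_right hc hf₂ε.le
    _ = M.f₁ ε q * p := by rw [R]; field_simp
    _ ≤ M.f₁ X q * p := mul_le_mul_of_nonneg_right (M.f₁_anti q hX (hX.trans hXε) hXε) hp
  linarith [M.f₂_mono q hX (hX.trans hXε) hXε]

variable {M} {𝔔 𝔮 : Q}

theorem Assumptions.R_le_R_fittest (hA : M.Assumptions 𝔔 𝔮) {Y : ℝ} (hY : 0 ≤ Y) (q : Q) :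
    M.R Y q ≤ M.R Y 𝔔 := by
  rcases (hA.1 q).lt_or_eq with h | h
  · exact ((hA.2.2.2.1 𝔔 q Y hY).1 h).le
  · exact ((hA.2.2.2.1 q 𝔔 Y hY).2 h).le

theorem Assumptions.exists_f₁_le_f₂ (hA : M.Assumptions 𝔔 𝔮) :
    ∃ Xs, ∀ X, Xs ≤ X → ∀ q, M.f₁ X q ≤ M.f₂ X q := by
  obtain ⟨Xs, hXs0, hXs⟩ := hA.2.2.1
  refine ⟨Xs, fun X hX q => ?_⟩
  have hX0 : 0 ≤ X := hXs0.trans hX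
  have hR : M.R X q ≤ 1 :=
    (hA.R_le_R_fittest hX0 q).trans ((M.R_antitoneOn 𝔔 hXs0 hX0 hX).trans hXs)
  exact (div_le_one (M.f₂_pos hX0 q)).1 hR

end EGTRates

namespace IsSelMutSolution

variable {Q : Type*} [MetricSpace Q] [MeasurableSpace Q] [BorelSpace Q]
  {M : EGTRates Q} {γ : Q → ProbabilityMeasure Q} {μ : ℝ → Measure Q}

theorem toReal_le_total (hμ : IsSelMutSolution M γ μ) (t : ℝ) (E : Set Q) :
    (μ t E).toReal ≤ (μ t univ).toReal :=
  have := hμ.1 t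
  ENNReal.toReal_mono (measure_ne_top _ _) (measure_mono (subset_univ E))

theorem toReal_pos (hμ : IsSelMutSolution M γ μ) {t : ℝ} {E : Set Q} (h : 0 < μ t E) :
    0 < (μ t E).toReal :=
  have := hμ.1 t
  ENNReal.toReal_pos h.ne' (measure_ne_top _ _)

variable [CompactSpace Q]

theorem integrable (hμ : IsSelMutSolution M γ μ) {f : Q → ℝ} (hf : Continuous f) (t : ℝ) :
    Integrable f (μ t) :=
  have := hμ.1 t
  hf.integrable_of_hasCompactSupport (.of_compactSpace f)

theorem hasDerivWithinAt_total (hμ : IsSelMutSolution M γ μ) {t : ℝ} (ht : 0 ≤ t) :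
    HasDerivWithinAt (fun s => (μ s univ).toReal)
      (∫ q, M.f₁ (μ t univ).toReal q - M.f₂ (μ t univ).toReal q ∂(μ t)) (Ici 0) t := by
  have h := hμ.2 t ht univ MeasurableSet.univ
  simp only [measure_univ, ENNReal.toReal_one, mul_one, setIntegral_univ] at h
  rwa [integral_sub (hμ.integrable (M.f₁_cont _) t) (hμ.integrable (M.f₂_cont _) t)]

theorem exists_total_le {𝔔 𝔮 : Q} (hμ : IsSelMutSolution M γ μ) (hA : M.Assumptions 𝔔 𝔮) :
    ∃ B, ∀ t ∈ Ici 0, (μ t univ).toReal ≤ B := by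
  obtain ⟨Xs, hXs⟩ := hA.exists_f₁_le_f₂
  refine ⟨max (μ 0 univ).toReal Xs, image_le_of_deriv_right_nonpos_of_ge
    (fun t ht => hμ.hasDerivWithinAt_total ht) (le_max_left _ _) fun t _ hB => ?_⟩
  exact integral_nonpos fun q => sub_nonpos.2 (hXs _ ((le_max_right _ _).trans hB) q)

theorem const_mul_le_deriv (hμ : IsSelMutSolution M γ μ) (hγ : Continuous γ) {E : Set Q}
    (hE : MeasurableSet E) (t : ℝ) {k : ℝ}
    (hk : ∀ q ∈ E, k ≤ M.f₁ (μ t univ).toReal q * ((γ q : Measure Q) E).toReal -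
      M.f₂ (μ t univ).toReal q) :
    k * (μ t E).toReal ≤ (∫ q, M.f₁ (μ t univ).toReal q * ((γ q : Measure Q) E).toReal ∂(μ t)) -
      ∫ q in E, M.f₂ (μ t univ).toReal q ∂(μ t) := by
  set X := (μ t univ).toReal
  have := hμ.1 t
  have hbirth : Integrable (fun q => M.f₁ X q * ((γ q : Measure Q) E).toReal) (μ t) := by
    refine (hμ.integrable (M.f₁_cont X) t).mono ((M.f₁_cont X).measurable.mul
      (hγ.measurable_probabilityMeasure_apply hE).ennreal_toReal).aestronglyMeasurable
      (ae_of_all _ fun q => ?_)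
    rw [norm_mul, Real.norm_of_nonneg ENNReal.toReal_nonneg]
    exact mul_le_of_le_one_right (norm_nonneg _) (ENNReal.toReal_le_of_le_ofReal zero_le_one
      (by simpa using prob_le_one))
  have hdeath := hμ.integrable (M.f₂_cont X) t
  calc k * (μ t E).toReal = ∫ _ in E, k ∂(μ t) := by
        rw [setIntegral_const, smul_eq_mul, measureReal_def, mul_comm]
    _ ≤ ∫ q in E, (M.f₁ X q * ((γ q : Measure Q) E).toReal - M.f₂ X q) ∂(μ t) :=
        setIntegral_mono_on (integrableOn_const (measure_ne_top _ _))
          (hbirth.sub hdeath).integrableOn hE hk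
    _ = (∫ q in E, M.f₁ X q * ((γ q : Measure Q) E).toReal ∂(μ t)) - ∫ q in E, M.f₂ X q ∂(μ t) :=
        integral_sub hbirth.integrableOn hdeath.integrableOn
    _ ≤ _ := sub_le_sub_right (setIntegral_le_integral hbirth (ae_of_all _ fun q =>
        mul_nonneg (M.f₁_nonneg _ _) ENNReal.toReal_nonneg)) _

theorem mul_exp_le_measure (hμ : IsSelMutSolution M γ μ) (hγ : Continuous γ) {E : Set Q}
    (hE : MeasurableSet E) {a k : ℝ} (ha : 0 ≤ a)
    (hk : ∀ t ∈ Ici a, ∀ q ∈ E, k ≤ M.f₁ (μ t univ).toReal q * ((γ q : Measure Q) E).toReal -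
      M.f₂ (μ t univ).toReal q) :
    ∀ t ∈ Ici a, (μ a E).toReal * Real.exp (k * (t - a)) ≤ (μ t E).toReal :=
  mul_exp_le_of_const_mul_le_deriv
    (fun t (ht : a ≤ t) => (hμ.2 t (ha.trans ht) E hE).mono (Ici_subset_Ici.2 ha))
    fun t ht => hμ.const_mul_le_deriv hγ hE t (hk t ht)

end IsSelMutSolution

/-- Uniform weak persistence: if there exist a Borel set `E` and `ε > 0`
with `inf_{q∈E} R(ε,q)·γ(q)(E) > 1` and `μ(0)(E) > 0`, then
`limsup_{t→∞} μ(t)(Q) ≥ ε`. -/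
theorem selMut_uniform_weak_persistence
    {Q : Type*} [MetricSpace Q] [CompactSpace Q] [MeasurableSpace Q] [BorelSpace Q]
    (M : EGTRates Q) (𝔔 𝔮 : Q) (hA : M.Assumptions 𝔔 𝔮)
    (γ : Q → ProbabilityMeasure Q) (hγ : Continuous γ)
    (μ : ℝ → Measure Q) (hμ : IsSelMutSolution M γ μ)
    (E : Set Q) (hE : MeasurableSet E) (ε : ℝ) (hε : 0 < ε)
    (hinf : ∃ c : ℝ, 1 < c ∧ ∀ q ∈ E, c ≤ M.R ε q * ((γ q : Measure Q) E).toReal)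
    (h0 : 0 < (μ 0) E) :
    ε ≤ Filter.limsup (fun t => ((μ t) Set.univ).toReal) Filter.atTop := by
  obtain ⟨B, hB⟩ := hμ.exists_total_le hA
  obtain ⟨ϖ, hϖ, hϖle⟩ := M.exists_pos_le_f₂
  obtain ⟨c, hc, hcE⟩ := hinf
  obtain ⟨D, hD⟩ := (isCompact_range (M.f₂_cont B)).bddAbove
  by_contra! hlt
  obtain ⟨T, hT⟩ := eventually_atTop.1 ((eventually_lt_of_limsup_lt hlt
    (isBoundedUnder_of_eventually_le (eventually_atTop.2 ⟨0, hB⟩))).and (eventually_ge_atTop 0))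
  have hT0 : 0 ≤ T := (hT T le_rfl).2
  have hsurvival : ∀ t ∈ Ici 0, ∀ q ∈ E,
      -D ≤ M.f₁ (μ t univ).toReal q * ((γ q : Measure Q) E).toReal - M.f₂ (μ t univ).toReal q :=
    fun t ht q _ => by
      have hX := hB t ht
      linarith [M.f₂_mono q ENNReal.toReal_nonneg (ENNReal.toReal_nonneg.trans hX) hX,
        hD ⟨q, rfl⟩, mul_nonneg (M.f₁_nonneg (μ t univ).toReal q)
          (ENNReal.toReal_nonneg (a := (γ q : Measure Q) E))]
  have hgrowth : ∀ t ∈ Ici T, ∀ q ∈ E, (c - 1) * ϖ ≤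
      M.f₁ (μ t univ).toReal q * ((γ q : Measure Q) E).toReal - M.f₂ (μ t univ).toReal q :=
    fun t ht q hq => (mul_le_mul_of_nonneg_left (hϖle ε hε.le q) (by linarith)).trans
      (M.sub_mul_f₂_le_of_le_R_mul ENNReal.toReal_nonneg (hT t ht).1.le ENNReal.toReal_nonneg
        (hcE q hq))
  have hET : 0 < (μ T E).toReal :=
    (mul_pos (hμ.toReal_pos h0) (Real.exp_pos _)).trans_le
      (hμ.mul_exp_le_measure hγ hE le_rfl hsurvival T hT0)
  have hunbdd : Tendsto (fun t => (μ T E).toReal * Real.exp ((c - 1) * ϖ * (t - T))) atTop atTop :=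
    (Real.tendsto_exp_atTop.comp ((tendsto_atTop_add_const_right _ (-T) tendsto_id).const_mul_atTop
      (mul_pos (sub_pos.2 hc) hϖ))).const_mul_atTop hET
  obtain ⟨t, htε, htT⟩ := ((hunbdd.eventually_gt_atTop ε).and (eventually_ge_atTop T)).exists
  linarith [hμ.mul_exp_le_measure hγ hE hT0 hgrowth t htT, (hT t htT).1, hμ.toReal_le_total t E]

end
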